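/- Suppose z ∈ Z(𝓗). If x, x′ ∈ W̃ are laterally conjugate, then z_x = z_{x′}. -/

import Mathlib

section

variable {B W Ω : Type*} [Group W] [Group Ω] {M : CoxeterMatrix B}

/-- The length function on `W̃ = W ⋊ Ω`, extending the Coxeter length of `(W, S)` by
`ℓ(wτ) = ℓ(w)`. -/
noncomputable def extLen (cs : CoxeterSystem M W) {φ : Ω →* MulAut W}
    (x : W ⋊[φ] Ω) : ℕ := cs.length x.left

/-- `x ∈ W̃` is a simple reflection, i.e. an element of `S` viewed inside `W̃`. -/
def IsSimpleElt (cs : CoxeterSystem M W) {φ : Ω →* MulAut W} (x : W ⋊[φ] Ω) : Prop :=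
  ∃ i : B, x = SemidirectProduct.inl (cs.simple i)

/-- The sequence of iterated conjugates `x, s₁xs₁, s₂s₁xs₁s₂, …`. -/
def conjSeqW {φ : Ω →* MulAut W} (x : W ⋊[φ] Ω) (ss : ℕ → W ⋊[φ] Ω) : ℕ → W ⋊[φ] Ω
  | 0 => x
  | n + 1 => ss n * conjSeqW x ss n * ss n

/-- `x` and `x′` are laterally conjugate: `x′` is obtained from `x` by a sequence of
length-preserving conjugations by simple reflections. -/
noncomputable def LaterallyConj (cs : CoxeterSystem M W) {φ : Ω →* MulAut W}
    (x x' : W ⋊[φ] Ω) : Prop :=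
  ∃ (n : ℕ) (ss : ℕ → W ⋊[φ] Ω), (∀ i < n, IsSimpleElt cs (ss i)) ∧
    (∀ i < n, extLen cs (conjSeqW x ss (i + 1)) = extLen cs x) ∧ x' = conjSeqW x ss n

/-- `x` has the Direct Diamond Property. -/
noncomputable def DirectDiamond (cs : CoxeterSystem M W) {φ : Ω →* MulAut W}
    (x : W ⋊[φ] Ω) : Prop :=
  ∃ s : W ⋊[φ] Ω, IsSimpleElt cs s ∧ extLen cs x < extLen cs (s * x) ∧
    extLen cs x < extLen cs (x * s) ∧ s * x * s ≠ x

/-- `x` has the Diamond Property: it is laterally conjugate to an element with the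
Direct Diamond Property. -/
noncomputable def Diamond (cs : CoxeterSystem M W) {φ : Ω →* MulAut W}
    (x : W ⋊[φ] Ω) : Prop :=
  ∃ x' : W ⋊[φ] Ω, LaterallyConj cs x x' ∧ DirectDiamond cs x'

end

/-!
If `ℓ(sxs) = ℓ(x)` for a simple reflection `s`, either `s` is a descent of `x` on both sides, and
then `sxs = x` by the exchange condition, or `s` is a descent on both sides of `u = sx` or `u = xs`,
where `{us, su} = {x, sxs}`. In the second case the `T_u`-coefficients of `z T_s` and `T_s z` are
`z_{us} + (q_s - 1) z_u` and `z_{su} + (q_s - 1) z_u`, so centrality gives `z_{sxs} = z_x`.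
The exchange condition is derived from Tits' representation of `W` on `W × {±1}`: the parity of
the number of occurrences of a reflection in the left inversion sequence of a word depends only on
the element the word represents.
-/

open List

namespace CoxeterSystem

variable {B W : Type*} [Group W] {M : CoxeterMatrix B} (cs : CoxeterSystem M W)

local prefix:100 "s" => cs.simple
local prefix:100 "π" => cs.wordProd
local prefix:100 "ℓ" => cs.length
local prefix:100 "lis" => cs.leftInvSeq

theorem simple_mul_mul_simple_eq_simple_iff (i : B) (w : W) :
    s i * w * s i = s i ↔ w = s i := by
  constructor
  · intro h; simpa [mul_assoc] using congrArg (fun v => s i * v * s i) h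
  · rintro rfl; simp

theorem wordProd_alternatingWord_two_mul (i j : B) : π (alternatingWord i j (2 * M i j)) = 1 := by
  rw [prod_alternatingWord_eq_mul_pow, if_pos (even_two_mul _), Nat.mul_div_cancel_left _ two_pos,
    simple_mul_simple_pow, mul_one]

theorem leftInvSeq_alternatingWord_drop (i j : B) :
    (lis (alternatingWord i j (2 * M i j))).drop (M i j) =
      (lis (alternatingWord i j (2 * M i j))).take (M i j) := by
  apply List.ext_getElem (by simp; omega)
  intro k hk _
  simp only [getElem_drop, getElem_take]
  simp only [length_drop, length_leftInvSeq, length_alternatingWord] at hk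
  rw [getElem_leftInvSeq_alternatingWord _ _ _ _ _ (by omega),
    getElem_leftInvSeq_alternatingWord _ _ _ _ _ (by omega), prod_alternatingWord_eq_mul_pow,
    prod_alternatingWord_eq_mul_pow]
  have hdiv : (2 * (M i j + k) + 1) / 2 = M i j + k := by omega
  rw [if_neg (by simp [parity_simps]), if_neg (by simp [parity_simps]), hdiv, pow_add,
    M.symmetric, simple_mul_simple_pow, one_mul]
  congr 2
  omega

section Tits

variable [DecidableEq W]

def titsPerm (i : B) : Equiv.Perm (W × ℤˣ) :=
  Function.Involutive.toPerm (fun p => (s i * p.1 * s i, if p.1 = s i then -p.2 else p.2)) <| by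
    rintro ⟨w, ε⟩
    simp only [simple_mul_mul_simple_eq_simple_iff, Prod.mk.injEq]
    refine ⟨by simp [← mul_assoc], ?_⟩
    split_ifs <;> simp

theorem titsPerm_apply (i : B) (w : W) (ε : ℤˣ) :
    cs.titsPerm i (w, ε) = (s i * w * s i, if w = s i then -ε else ε) := rfl

theorem prod_map_titsPerm (ω : List B) (w : W) (ε : ℤˣ) :
    (ω.map cs.titsPerm).prod (w, ε) =
      (π ω * w * (π ω)⁻¹, ε * (-1) ^ (lis ω).count (π ω * w * (π ω)⁻¹)) := by
  induction ω with
  | nil => simp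
  | cons i ω ih =>
    rw [map_cons, prod_cons, Equiv.Perm.mul_apply, ih, titsPerm_apply]
    simp only [leftInvSeq, wordProd_cons, mul_inv_rev, inv_simple]
    set v := π ω * w * (π ω)⁻¹
    have hconj : s i * π ω * w * ((π ω)⁻¹ * s i) = s i * v * s i := by simp only [v]; group
    have hmap : s i * v * s i = MulAut.conj (s i) v := by simp
    rw [hconj, count_cons, hmap, count_map_of_injective _ _ (MulAut.conj (s i)).injective,
      ← hmap]
    simp only [beq_iff_eq, eq_comm (a := s i), simple_mul_mul_simple_eq_simple_iff]
    split_ifs <;> simp [pow_succ]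

theorem prod_map_titsPerm_alternatingWord (i j : B) (m : ℕ) :
    ((alternatingWord i j (2 * m)).map cs.titsPerm).prod =
      (cs.titsPerm i * cs.titsPerm j) ^ m := by
  induction m with
  | zero => simp [alternatingWord]
  | succ m ih =>
    rw [show 2 * (m + 1) = 2 * m + 1 + 1 by ring, alternatingWord_succ', alternatingWord_succ',
      if_neg (by simp [parity_simps]), if_pos (even_two_mul m)]
    simp only [map_cons, prod_cons, ih, pow_succ', mul_assoc]

theorem even_count_leftInvSeq_alternatingWord (i j : B) (t : W) :
    Even ((lis (alternatingWord i j (2 * M i j))).count t) := by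
  rw [← take_append_drop (M i j) (lis _), leftInvSeq_alternatingWord_drop, count_append]
  exact ⟨_, rfl⟩

theorem isLiftable_titsPerm : M.IsLiftable cs.titsPerm := by
  intro i j
  rw [← prod_map_titsPerm_alternatingWord]
  ext ⟨w, ε⟩ : 1
  rw [prod_map_titsPerm, wordProd_alternatingWord_two_mul, one_mul, inv_one, mul_one,
    (even_count_leftInvSeq_alternatingWord cs i j w).neg_one_pow, mul_one]
  rfl

def titsRep : W →* Equiv.Perm (W × ℤˣ) := cs.lift ⟨cs.titsPerm, cs.isLiftable_titsPerm⟩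

theorem titsRep_wordProd (ω : List B) : cs.titsRep (π ω) = (ω.map cs.titsPerm).prod := by
  simp only [titsRep, wordProd, map_list_prod, map_map]
  congr 2
  ext i : 1
  exact cs.lift_apply_simple _ i

theorem neg_one_pow_count_leftInvSeq_eq (ω ω' : List B) (h : π ω = π ω') (t : W) :
    (-1 : ℤˣ) ^ (lis ω).count t = (-1) ^ (lis ω').count t := by
  have key := congrArg (fun g => (g ((π ω)⁻¹ * t * π ω, 1)).2) (congrArg cs.titsRep h)
  simp only [titsRep_wordProd, prod_map_titsPerm] at key
  rwa [← h, show π ω * ((π ω)⁻¹ * t * π ω) * (π ω)⁻¹ = t by group, one_mul, one_mul]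
    at key

end Tits

theorem simple_mem_leftInvSeq_of_isLeftDescent {ω : List B} {i : B}
    (h : cs.IsLeftDescent (π ω) i) : s i ∈ lis ω := by
  classical
  obtain ⟨ω', hω', hω'_eq⟩ := cs.exists_isReduced (s i * π ω)
  have hprod : π (i :: ω') = π ω := by
    rw [wordProd_cons, ← hω'_eq, simple_mul_simple_cancel_left]
  have hnot : s i ∉ lis ω' := fun hmem => by
    have := (cs.isLeftInversion_of_mem_leftInvSeq hω' hmem).2
    rw [← hω'_eq, simple_mul_simple_cancel_left] at this
    exact lt_asymm h this
  by_contra hmem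
  have hsign := neg_one_pow_count_leftInvSeq_eq cs (i :: ω') ω hprod (s i)
  have hnot_conj : s i ∉ (lis ω').map (MulAut.conj (s i)) := by
    intro hmem'
    obtain ⟨t, ht, hti⟩ := mem_map.mp hmem'
    simp only [MulAut.conj_apply, inv_simple, simple_mul_mul_simple_eq_simple_iff] at hti
    exact hnot (hti ▸ ht)
  rw [count_eq_zero_of_not_mem hmem, leftInvSeq, count_cons_self,
    count_eq_zero_of_not_mem hnot_conj] at hsign
  simp at hsign

theorem simple_mul_mul_simple_eq_self_of_length_lt {u : W} {i j : B} (h1 : ℓ u < ℓ (s i * u))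
    (h2 : ℓ (s i * u * s j) < ℓ (u * s j)) : s i * u * s j = u := by
  obtain ⟨ω, hω, rfl⟩ := cs.exists_isReduced u
  have hdesc : cs.IsLeftDescent (π (ω.concat j)) i := by
    rwa [IsLeftDescent, wordProd_concat, ← mul_assoc]
  have hmem := cs.simple_mem_leftInvSeq_of_isLeftDescent hdesc
  rw [leftInvSeq_concat, concat_eq_append, mem_append, mem_singleton] at hmem
  rcases hmem with hmem | hmem
  · exact absurd (cs.isLeftInversion_of_mem_leftInvSeq hω hmem).2 (not_lt.mpr h1.le)
  · rw [hmem, inv_mul_cancel_right, simple_mul_simple_cancel_right]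

theorem simple_mul_mul_simple_eq_self_of_length_eq {w : W} {i j : B} (h1 : ℓ (s i * w) < ℓ w)
    (h2 : ℓ (w * s j) < ℓ w) (h3 : ℓ (s i * w * s j) = ℓ w) : s i * w * s j = w := by
  have key := cs.simple_mul_mul_simple_eq_self_of_length_lt (u := w * s j) (i := i) (j := j)
    (by rwa [← mul_assoc, h3]) (by rwa [simple_mul_simple_cancel_right, ← mul_assoc,
      simple_mul_simple_cancel_right])
  rw [← mul_assoc, simple_mul_simple_cancel_right] at key
  rw [key, simple_mul_simple_cancel_right]

end CoxeterSystem

namespace Module.Basis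

variable {X R H : Type*} [CommRing R] [AddCommGroup H] [Module R H]

theorem repr_map_apply_eq_of_descent (T : Basis X R H) (f : H →ₗ[R] H) {t : X → X}
    (ht : Function.Involutive t) (L : X → ℕ) (hL : ∀ y, L (t y) ≠ L y) (a b : R)
    (hup : ∀ y, L y < L (t y) → f (T y) = T (t y))
    (hdown : ∀ y, L (t y) < L y → f (T y) = a • T y + b • T (t y))
    {u : X} (hu : L (t u) < L u) (h : H) :
    T.repr (f h) u = T.repr h (t u) + a * T.repr h u := by
  classical
  suffices hlin : Finsupp.lapply u ∘ₗ T.repr.toLinearMap ∘ₗ f =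
      Finsupp.lapply (t u) ∘ₗ T.repr.toLinearMap +
        a • (Finsupp.lapply u ∘ₗ T.repr.toLinearMap) from
    LinearMap.congr_fun hlin h
  refine T.ext fun y => ?_
  have ht_eq : t y = u ↔ y = t u := ⟨fun h => h ▸ (ht y).symm, fun h => h ▸ ht u⟩
  simp only [LinearMap.coe_comp, Function.comp_apply, LinearMap.add_apply, LinearMap.smul_apply,
    LinearEquiv.coe_coe, Finsupp.lapply_apply, repr_self, smul_eq_mul]
  rcases (hL y).lt_or_gt with hlt | hgt
  · have hy : y ≠ t u := by rintro rfl; rw [ht] at hlt; omega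
    rw [hdown y hlt]
    simp [Finsupp.single_apply, hy, ht_eq]
  · have hy : y ≠ u := by rintro rfl; omega
    rw [hup y hgt]
    simp [Finsupp.single_apply, hy, ht_eq]

end Module.Basis

open SemidirectProduct

section SemidirectProduct

variable {B W Ω : Type*} [Group W] [Group Ω] {M : CoxeterMatrix B} (cs : CoxeterSystem M W)
  {φ : Ω →* MulAut W}

theorem extLen_inl_mul (w : W) (y : W ⋊[φ] Ω) :
    extLen cs (inl w * y) = cs.length (w * y.left) := by
  simp [extLen, mul_left]

theorem extLen_mul_inl (y : W ⋊[φ] Ω) (w : W) :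
    extLen cs (y * inl w) = cs.length (y.left * φ y.right w) := by
  simp [extLen, mul_left]

def MapsSimplesToSimples (φ : Ω →* MulAut W) : Prop :=
  ∀ (τ : Ω) (i : B), ∃ j : B, φ τ (cs.simple i) = cs.simple j

variable {cs}

theorem IsSimpleElt.mul_self {s : W ⋊[φ] Ω} (hs : IsSimpleElt cs s) : s * s = 1 := by
  obtain ⟨i, rfl⟩ := hs
  rw [← map_mul, cs.simple_mul_simple_self, map_one]

theorem IsSimpleElt.extLen_mul_left_ne {s : W ⋊[φ] Ω} (hs : IsSimpleElt cs s)
    (y : W ⋊[φ] Ω) : extLen cs (s * y) ≠ extLen cs y := by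
  obtain ⟨i, rfl⟩ := hs
  rw [extLen_inl_mul]
  exact cs.length_simple_mul_ne y.left i

theorem IsSimpleElt.extLen_mul_right_ne (hφ : MapsSimplesToSimples cs φ) {s : W ⋊[φ] Ω}
    (hs : IsSimpleElt cs s) (y : W ⋊[φ] Ω) : extLen cs (y * s) ≠ extLen cs y := by
  obtain ⟨i, rfl⟩ := hs
  obtain ⟨j, hj⟩ := hφ y.right i
  rw [extLen_mul_inl, hj]
  exact cs.length_mul_simple_ne y.left j

theorem IsSimpleElt.mul_mul_eq_self_of_extLen_eq (hφ : MapsSimplesToSimples cs φ)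
    {s x : W ⋊[φ] Ω} (hs : IsSimpleElt cs s)
    (hleft : extLen cs (s * x) < extLen cs x) (hright : extLen cs (x * s) < extLen cs x)
    (hconj : extLen cs (s * x * s) = extLen cs x) : s * x * s = x := by
  obtain ⟨i, rfl⟩ := hs
  obtain ⟨j, hj⟩ := hφ x.right i
  have hleft_eq :
      (inl (cs.simple i) * x * inl (cs.simple i)).left = cs.simple i * x.left * cs.simple j := by
    simp [mul_left, hj]
  rw [extLen_inl_mul] at hleft
  rw [extLen_mul_inl, hj] at hright
  rw [extLen, hleft_eq] at hconj
  ext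
  · rw [hleft_eq, cs.simple_mul_mul_simple_eq_self_of_length_eq hleft hright hconj]
  · simp [mul_right]

end SemidirectProduct

section Hecke

variable {B W Ω H : Type*} [Group W] [Group Ω] [Ring H] [Algebra ℂ H] {M : CoxeterMatrix B}
  (cs : CoxeterSystem M W) {φ : Ω →* MulAut W}

def LeftMulRule (T : Module.Basis (W ⋊[φ] Ω) ℂ H) (q : W ⋊[φ] Ω → ℕ) : Prop :=
  ∀ s x : W ⋊[φ] Ω, IsSimpleElt cs s →
    (extLen cs x < extLen cs (s * x) → T s * T x = T (s * x)) ∧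
    (extLen cs (s * x) < extLen cs x →
      T s * T x = ((q s : ℂ) - 1) • T x + (q s : ℂ) • T (s * x))

def RightMulRule (T : Module.Basis (W ⋊[φ] Ω) ℂ H) (q : W ⋊[φ] Ω → ℕ) : Prop :=
  ∀ s x : W ⋊[φ] Ω, IsSimpleElt cs s →
    (extLen cs x < extLen cs (x * s) → T x * T s = T (x * s)) ∧
    (extLen cs (x * s) < extLen cs x →
      T x * T s = ((q s : ℂ) - 1) • T x + (q s : ℂ) • T (x * s))

variable {cs} {T : Module.Basis (W ⋊[φ] Ω) ℂ H} {q : W ⋊[φ] Ω → ℕ}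

theorem LeftMulRule.repr_simple_mul_apply (hT : LeftMulRule cs T q) {s u : W ⋊[φ] Ω}
    (hs : IsSimpleElt cs s) (hu : extLen cs (s * u) < extLen cs u) (h : H) :
    T.repr (T s * h) u = T.repr h (s * u) + ((q s : ℂ) - 1) * T.repr h u :=
  T.repr_map_apply_eq_of_descent (LinearMap.mulLeft ℂ (T s))
    (fun y => by rw [← mul_assoc, hs.mul_self, one_mul]) (extLen cs) hs.extLen_mul_left_ne _ _
    (fun y => (hT s y hs).1) (fun y => (hT s y hs).2) hu h

theorem RightMulRule.repr_mul_simple_apply (hT : RightMulRule cs T q)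
    (hφ : MapsSimplesToSimples cs φ) {s u : W ⋊[φ] Ω}
    (hs : IsSimpleElt cs s) (hu : extLen cs (u * s) < extLen cs u) (h : H) :
    T.repr (h * T s) u = T.repr h (u * s) + ((q s : ℂ) - 1) * T.repr h u :=
  T.repr_map_apply_eq_of_descent (LinearMap.mulRight ℂ (T s))
    (fun y => by rw [mul_assoc, hs.mul_self, mul_one]) (extLen cs) (hs.extLen_mul_right_ne hφ)
    _ _ (fun y => (hT s y hs).1) (fun y => (hT s y hs).2) hu h

theorem repr_mul_simple_eq_repr_simple_mul (hφ : MapsSimplesToSimples cs φ)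
    (hTleft : LeftMulRule cs T q) (hTright : RightMulRule cs T q) {z : H}
    (hz : z ∈ Set.center H) {s u : W ⋊[φ] Ω} (hs : IsSimpleElt cs s)
    (hleft : extLen cs (s * u) < extLen cs u) (hright : extLen cs (u * s) < extLen cs u) :
    T.repr z (u * s) = T.repr z (s * u) := by
  have h := hTright.repr_mul_simple_apply hφ hs hright z
  rw [(hz.comm (T s)).eq, hTleft.repr_simple_mul_apply hs hleft z] at h
  exact (add_right_cancel h).symm

theorem repr_simple_mul_mul_simple_eq (hφ : MapsSimplesToSimples cs φ)
    (hTleft : LeftMulRule cs T q) (hTright : RightMulRule cs T q) {z : H}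
    (hz : z ∈ Set.center H) {s x : W ⋊[φ] Ω} (hs : IsSimpleElt cs s)
    (hconj : extLen cs (s * x * s) = extLen cs x) :
    T.repr z (s * x * s) = T.repr z x := by
  rcases (hs.extLen_mul_left_ne x).lt_or_gt with hleft | hleft
  · rcases (hs.extLen_mul_right_ne hφ x).lt_or_gt with hright | hright
    · rw [hs.mul_mul_eq_self_of_extLen_eq hφ hleft hright hconj]
    · have := repr_mul_simple_eq_repr_simple_mul hφ hTleft hTright hz hs (u := x * s)
        (by rwa [← mul_assoc, hconj]) (by rwa [mul_assoc, hs.mul_self, mul_one])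
      rwa [mul_assoc, hs.mul_self, mul_one, ← mul_assoc, eq_comm] at this
  · have := repr_mul_simple_eq_repr_simple_mul hφ hTleft hTright hz hs (u := s * x)
      (by rwa [← mul_assoc, hs.mul_self, one_mul]) (by rwa [hconj])
    rwa [← mul_assoc, hs.mul_self, one_mul] at this

end Hecke

theorem statement12_general {B W Ω H : Type*} [Group W] [Group Ω] [Ring H] [Algebra ℂ H]
    {M : CoxeterMatrix B} (cs : CoxeterSystem M W) (φ : Ω →* MulAut W)
    (hφ : ∀ (τ : Ω) (i : B), ∃ j : B, φ τ (cs.simple i) = cs.simple j)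
    (T : Module.Basis (W ⋊[φ] Ω) ℂ H)
    (q : W ⋊[φ] Ω → ℕ)
    (hTleft : ∀ s x : W ⋊[φ] Ω, IsSimpleElt cs s →
      (extLen cs x < extLen cs (s * x) → T s * T x = T (s * x)) ∧
      (extLen cs (s * x) < extLen cs x →
        T s * T x = ((q s : ℂ) - 1) • T x + (q s : ℂ) • T (s * x)))
    (hTright : ∀ s x : W ⋊[φ] Ω, IsSimpleElt cs s →
      (extLen cs x < extLen cs (x * s) → T x * T s = T (x * s)) ∧
      (extLen cs (x * s) < extLen cs x →
        T x * T s = ((q s : ℂ) - 1) • T x + (q s : ℂ) • T (x * s)))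
    (z : H) (hz : z ∈ Set.center H)
    (x x' : W ⋊[φ] Ω) (hlat : LaterallyConj cs x x') :
    T.repr z x = T.repr z x' := by
  obtain ⟨n, ss, hsimple, hlen, rfl⟩ := hlat
  induction n with
  | zero => rfl
  | succ n ih =>
    have hlen_n : extLen cs (conjSeqW x ss n) = extLen cs x := by
      cases n with
      | zero => rfl
      | succ k => exact hlen k (by omega)
    have hstep : extLen cs (ss n * conjSeqW x ss n * ss n) = extLen cs (conjSeqW x ss n) :=
      (hlen n (by omega)).trans hlen_n.symm
    rw [ih (fun i hi => hsimple i (by omega)) (fun i hi => hlen i (by omega)), conjSeqW,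
      repr_simple_mul_mul_simple_eq hφ hTleft hTright hz (hsimple n (by omega)) hstep]

/-- central elements have Iwahori–Matsumoto coefficients constant on
lateral-conjugacy classes. -/
theorem statement12 {B W Ω H : Type*} [Group W] [Group Ω] [Ring H] [Algebra ℂ H]
    {M : CoxeterMatrix B} (cs : CoxeterSystem M W) (φ : Ω →* MulAut W)
    (hφ : ∀ (τ : Ω) (i : B), ∃ j : B, φ τ (cs.simple i) = cs.simple j)
    (T : Module.Basis (W ⋊[φ] Ω) ℂ H)
    (q : W ⋊[φ] Ω → ℕ)
    (hq : ∀ s t : W ⋊[φ] Ω, IsSimpleElt cs s → IsSimpleElt cs t → IsConj s t → q s = q t)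
    (hTleft : ∀ s x : W ⋊[φ] Ω, IsSimpleElt cs s →
      (extLen cs x < extLen cs (s * x) → T s * T x = T (s * x)) ∧
      (extLen cs (s * x) < extLen cs x →
        T s * T x = ((q s : ℂ) - 1) • T x + (q s : ℂ) • T (s * x)))
    (hTright : ∀ s x : W ⋊[φ] Ω, IsSimpleElt cs s →
      (extLen cs x < extLen cs (x * s) → T x * T s = T (x * s)) ∧
      (extLen cs (x * s) < extLen cs x →
        T x * T s = ((q s : ℂ) - 1) • T x + (q s : ℂ) • T (x * s)))
    (hTom : ∀ (τ : Ω) (x : W ⋊[φ] Ω),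
      T (SemidirectProduct.inr τ * x) = T (SemidirectProduct.inr τ) * T x ∧
      T (x * SemidirectProduct.inr τ) = T x * T (SemidirectProduct.inr τ))
    (z : H) (hz : z ∈ Set.center H)
    (x x' : W ⋊[φ] Ω) (hlat : LaterallyConj cs x x') :
    T.repr z x = T.repr z x' :=
  statement12_general cs φ hφ T q hTleft hTright z hz x x' hlat
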